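/- arXiv:2408.02447 — 2 statements merged into one kernel-verified Lean document; each statement's English description precedes it below -/
import Mathlib

section
/- Let Ω ⊂ ℝ^m be a nonempty open set with 0 < |Ω| < ∞. Then for all t, δ > 0, H_Ω(t+δ) ≤ (H_Ω(t) + H_Ω(t+2δ))/2 (midpoint convexity of the heat content). -/
/-!
Write `u_t(z) = ∫_Ω p(z, y; t) dy`. By the semigroup property of the heat kernel,
`H(a + b) = ∫_{ℝ^m} u_a u_b`, in particular `H(s) = ∫ u_{s/2}²`. Integrating the pointwise
inequality `2 u_a u_b ≤ u_a² + u_b²` with `a = t/2`, `b = t/2 + δ` gives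
`2 H(t + δ) ≤ H(t) + H(t + 2δ)`. Working with lower Lebesgue integrals makes Tonelli available
without integrability side conditions; `|Ω| < ∞` is only needed to return to real integrals.
-/

open Real MeasureTheory Module
open scoped ENNReal

section HeatKernel

variable {V : Type*} [NormedAddCommGroup V] [InnerProductSpace ℝ V]

noncomputable def heatKernel (t : ℝ) (x y : V) : ℝ :=
  (4 * π * t) ^ (-(finrank ℝ V : ℝ) / 2) * exp (-dist x y ^ 2 / (4 * t))

lemma heatKernel_comm (t : ℝ) (x y : V) : heatKernel t x y = heatKernel t y x := by
  rw [heatKernel, heatKernel, dist_comm]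

lemma heatKernel_pos {t : ℝ} (ht : 0 < t) (x y : V) : 0 < heatKernel t x y := by
  unfold heatKernel
  positivity

lemma heatKernel_le {t : ℝ} (ht : 0 < t) (x y : V) :
    heatKernel t x y ≤ (4 * π * t) ^ (-(finrank ℝ V : ℝ) / 2) := by
  refine mul_le_of_le_one_right (by positivity) (exp_le_one_iff.2 ?_)
  rw [neg_div, neg_nonpos]
  positivity

@[fun_prop]
lemma continuous_heatKernel (t : ℝ) : Continuous fun p : V × V => heatKernel t p.1 p.2 := by
  unfold heatKernel
  fun_prop

lemma norm_sq_div_add_norm_sub_sq_div {a b : ℝ} (ha : 0 < a) (hb : 0 < b) (p q : V) :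
    ‖p‖ ^ 2 / (4 * a) + ‖q - p‖ ^ 2 / (4 * b)
      = (a + b) / (4 * (a * b)) * ‖p - (a / (a + b)) • q‖ ^ 2 + ‖q‖ ^ 2 / (4 * (a + b)) := by
  have hab : 0 < a + b := by positivity
  rw [norm_sub_sq_real q p, norm_sub_sq_real, real_inner_smul_right, norm_smul, mul_pow,
    Real.norm_eq_abs, sq_abs, real_inner_comm q p]
  field_simp
  ring

variable [FiniteDimensional ℝ V] [MeasurableSpace V] [BorelSpace V]

lemma integral_heatKernel_mul_heatKernel {a b : ℝ} (ha : 0 < a) (hb : 0 < b) (x y : V) :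
    ∫ z, heatKernel a x z * heatKernel b z y = heatKernel (a + b) x y := by
  have hab : 0 < a + b := by positivity
  set n : ℝ := (finrank ℝ V : ℝ)
  set k := (a + b) / (4 * (a * b)) with hk
  have hk0 : 0 < k := by positivity
  set r := x - (a / (a + b)) • (x - y)
  -- completing the square in `z` leaves a Gaussian centred at `r`
  have factor : ∀ z, heatKernel a x z * heatKernel b z y
      = (4 * π * a) ^ (-n / 2) * (4 * π * b) ^ (-n / 2) * exp (-dist x y ^ 2 / (4 * (a + b)))
        * exp (-k * ‖z - r‖ ^ 2) := by
    intro z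
    have hsq := norm_sq_div_add_norm_sub_sq_div ha hb (x - z) (x - y)
    have hzy : x - y - (x - z) = z - y := by abel
    have hzr : x - z - (a / (a + b)) • (x - y) = -(z - r) := by simp only [r]; abel
    rw [hzy, hzr, norm_neg] at hsq
    simp only [heatKernel, dist_eq_norm]
    rw [mul_mul_mul_comm, ← exp_add, mul_assoc _ (exp _), ← exp_add]
    congr 2
    linear_combination -hsq
  have gauss : ∫ z : V, exp (-k * ‖z - r‖ ^ 2) = (π / k) ^ (n / 2) := by
    rw [integral_sub_right_eq_self (fun z : V => exp (-k * ‖z‖ ^ 2)) r]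
    exact GaussianFourier.integral_rexp_neg_mul_sq_norm hk0
  have const : (4 * π * a) ^ (-n / 2) * (4 * π * b) ^ (-n / 2) * (π / k) ^ (n / 2)
      = (4 * π * (a + b)) ^ (-n / 2) := by
    rw [show (π / k) ^ (n / 2) = (k / π) ^ (-n / 2) by
      rw [neg_div, rpow_neg (by positivity), ← inv_rpow (by positivity), inv_div],
      ← mul_rpow (by positivity) (by positivity), ← mul_rpow (by positivity) (by positivity)]
    congr 1
    rw [hk]
    field_simp
  simp only [factor]
  rw [integral_const_mul, gauss, heatKernel, ← const]
  ring

end HeatKernel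

lemma ENNReal.two_mul_le_add_sq (a b : ℝ≥0∞) : 2 * a * b ≤ a ^ 2 + b ^ 2 := by
  rcases eq_or_ne a ⊤ with rfl | ha
  · simp
  rcases eq_or_ne b ⊤ with rfl | hb
  · simp
  lift a to NNReal using ha
  lift b to NNReal using hb
  exact_mod_cast _root_.two_mul_le_add_sq a b

section HeatContent

variable {V : Type*} [NormedAddCommGroup V] [InnerProductSpace ℝ V] [FiniteDimensional ℝ V]
  [MeasurableSpace V] [BorelSpace V]

lemma ofReal_heatKernel_add {a b : ℝ} (ha : 0 < a) (hb : 0 < b) (x y : V) :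
    ENNReal.ofReal (heatKernel (a + b) x y)
      = ∫⁻ z, ENNReal.ofReal (heatKernel a x z) * ENNReal.ofReal (heatKernel b z y) := by
  have hconv := integral_heatKernel_mul_heatKernel ha hb x y
  have hint : Integrable fun z => heatKernel a x z * heatKernel b z y :=
    .of_integral_ne_zero (hconv ▸ (heatKernel_pos (add_pos ha hb) x y).ne')
  rw [← hconv, ofReal_integral_eq_lintegral_ofReal hint
    (.of_forall fun z => (mul_pos (heatKernel_pos ha x z) (heatKernel_pos hb z y)).le)]
  exact lintegral_congr fun z => ENNReal.ofReal_mul (heatKernel_pos ha x z).le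

/-- `u_Ω(x; t)`: the solution at time `t` of the heat equation with initial datum `𝟙_Ω`. -/
noncomputable def temperature (t : ℝ) (Ω : Set V) (x : V) : ℝ≥0∞ :=
  ∫⁻ y in Ω, ENNReal.ofReal (heatKernel t x y)

noncomputable def heatContent (t : ℝ) (Ω : Set V) : ℝ≥0∞ :=
  ∫⁻ x in Ω, temperature t Ω x

@[fun_prop]
lemma measurable_temperature (t : ℝ) (Ω : Set V) : Measurable (temperature t Ω) :=
  Measurable.lintegral_prod_right' (f := fun p : V × V => ENNReal.ofReal (heatKernel t p.1 p.2))
    (by fun_prop)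

variable {Ω : Set V}

lemma heatContent_add_eq_lintegral_mul {a b : ℝ} (ha : 0 < a) (hb : 0 < b) :
    heatContent (a + b) Ω = ∫⁻ z, temperature a Ω z * temperature b Ω z := by
  calc heatContent (a + b) Ω
      = ∫⁻ x in Ω, ∫⁻ y in Ω, ∫⁻ z,
          ENNReal.ofReal (heatKernel a x z) * ENNReal.ofReal (heatKernel b z y) := by
        simp only [heatContent, temperature, ofReal_heatKernel_add ha hb]
    _ = ∫⁻ x in Ω, ∫⁻ z, ENNReal.ofReal (heatKernel a x z) * temperature b Ω z := by
        refine lintegral_congr fun x => ?_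
        rw [lintegral_lintegral_swap (Measurable.aemeasurable (by fun_prop))]
        exact lintegral_congr fun z => lintegral_const_mul _ (by fun_prop)
    _ = ∫⁻ z, ∫⁻ x in Ω, ENNReal.ofReal (heatKernel a x z) * temperature b Ω z :=
        lintegral_lintegral_swap (Measurable.aemeasurable (by fun_prop))
    _ = ∫⁻ z, temperature a Ω z * temperature b Ω z := by
        refine lintegral_congr fun z => ?_
        rw [lintegral_mul_const _ (by fun_prop)]
        simp only [temperature, heatKernel_comm a]

lemma two_mul_heatContent_midpoint_le {s t : ℝ} (hs : 0 < s) (ht : 0 < t) :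
    2 * heatContent ((s + t) / 2) Ω ≤ heatContent s Ω + heatContent t Ω := by
  have hsq : ∀ r, 0 < r → heatContent r Ω = ∫⁻ z, temperature (r / 2) Ω z ^ 2 := fun r hr => by
    simpa only [add_halves, sq] using
      heatContent_add_eq_lintegral_mul (Ω := Ω) (half_pos hr) (half_pos hr)
  rw [add_div, heatContent_add_eq_lintegral_mul (half_pos hs) (half_pos ht), hsq s hs,
    hsq t ht, ← lintegral_add_left (by fun_prop), ← lintegral_const_mul _ (by fun_prop)]
  exact lintegral_mono fun z => by
    simpa only [mul_assoc] using ENNReal.two_mul_le_add_sq _ _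

lemma temperature_le {t : ℝ} (ht : 0 < t) (x : V) :
    temperature t Ω x ≤ ENNReal.ofReal ((4 * π * t) ^ (-(finrank ℝ V : ℝ) / 2)) * volume Ω := by
  rw [← setLIntegral_const]
  exact lintegral_mono fun y => ENNReal.ofReal_le_ofReal (heatKernel_le ht x y)

lemma temperature_lt_top {t : ℝ} (ht : 0 < t) (hΩ : volume Ω ≠ ⊤) (x : V) :
    temperature t Ω x < ⊤ :=
  (temperature_le ht x).trans_lt (ENNReal.mul_lt_top ENNReal.ofReal_lt_top hΩ.lt_top)

lemma heatContent_ne_top {t : ℝ} (ht : 0 < t) (hΩ : volume Ω ≠ ⊤) : heatContent t Ω ≠ ⊤ := by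
  refine ((lintegral_mono (temperature_le ht)).trans_lt ?_).ne
  rw [setLIntegral_const]
  exact ENNReal.mul_lt_top (ENNReal.mul_lt_top ENNReal.ofReal_lt_top hΩ.lt_top) hΩ.lt_top

lemma integral_integral_heatKernel {t : ℝ} (ht : 0 < t) (hΩ : volume Ω ≠ ⊤) :
    ∫ x in Ω, ∫ y in Ω, heatKernel t x y = (heatContent t Ω).toReal := by
  have inner : ∀ x, ∫ y in Ω, heatKernel t x y = (temperature t Ω x).toReal := fun x =>
    integral_eq_lintegral_of_nonneg_ae (.of_forall fun y => (heatKernel_pos ht x y).le)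
      (by fun_prop : Continuous fun y => heatKernel t x y).aestronglyMeasurable
  simp only [inner]
  exact integral_toReal (measurable_temperature t Ω).aemeasurable
    (.of_forall (temperature_lt_top ht hΩ))

end HeatContent

theorem heat_content_midpoint_convex_general (m : ℕ)
    (Ω : Set (EuclideanSpace ℝ (Fin m)))
    (hvol : volume Ω < ⊤)
    (H : ℝ → ℝ)
    (hH : ∀ t : ℝ, H t = ∫ x in Ω, ∫ y in Ω,
        (4 * Real.pi * t) ^ (-(m : ℝ) / 2) * Real.exp (-(dist x y) ^ 2 / (4 * t)))
    (t δ : ℝ) (ht : 0 < t) (hδ : 0 < δ) :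
    H (t + δ) ≤ (H t + H (t + 2 * δ)) / 2 := by
  have hH' : ∀ s, 0 < s → H s = (heatContent s Ω).toReal := fun s hs => by
    rw [hH, ← integral_integral_heatKernel hs hvol.ne]
    simp only [heatKernel, finrank_euclideanSpace_fin]
  have hfin : ∀ s, 0 < s → heatContent s Ω ≠ ⊤ := fun s hs => heatContent_ne_top hs hvol.ne
  have hδ' : 0 < t + 2 * δ := by positivity
  have key := ENNReal.toReal_mono (ENNReal.add_ne_top.2 ⟨hfin t ht, hfin _ hδ'⟩)
    (two_mul_heatContent_midpoint_le (Ω := Ω) ht hδ')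
  rw [show (t + (t + 2 * δ)) / 2 = t + δ by ring, ENNReal.toReal_mul,
    ENNReal.toReal_add (hfin t ht) (hfin _ hδ')] at key
  rw [hH' _ (by positivity), hH' t ht, hH' _ hδ']
  norm_num at key
  linarith

theorem heat_content_midpoint_convex (m : ℕ) (hm : 1 ≤ m)
    (Ω : Set (EuclideanSpace ℝ (Fin m))) (hΩ : IsOpen Ω) (hne : Ω.Nonempty)
    (hpos : 0 < volume Ω) (hvol : volume Ω < ⊤)
    (H : ℝ → ℝ)
    (hH : ∀ t : ℝ, H t = ∫ x in Ω, ∫ y in Ω,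
        (4 * Real.pi * t) ^ (-(m : ℝ) / 2) * Real.exp (-(dist x y) ^ 2 / (4 * t)))
    (t δ : ℝ) (ht : 0 < t) (hδ : 0 < δ) :
    H (t + δ) ≤ (H t + H (t + 2 * δ)) / 2 :=
  heat_content_midpoint_convex_general m Ω hvol H hH t δ ht hδ
end

section
/- Let Ω ⊂ ℝ^m be a nonempty open set with 0 < |Ω| < ∞. Then t ↦ H_Ω(t) is strictly decreasing on (0,∞). -/
/-!
Writing the Gaussian kernel as the Fourier integral of a Gaussian and applying Fubini turns the
heat content into `(4π²)^(-m/2) ∫ exp (-t ‖ξ‖²) ‖φ ξ‖² dξ`, where `φ` is the characteristic function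
of Lebesgue measure restricted to `Ω`. Each integrand is nonincreasing in `t`, and strictly
decreasing wherever `ξ ≠ 0` and `φ ξ ≠ 0`; since `φ` is continuous with `φ 0 = |Ω| > 0`, this
happens on a nonempty open set.
-/

open Real MeasureTheory

open scoped RealInnerProductSpace ComplexConjugate Complex

theorem four_mul_pi_mul_rpow_neg {t : ℝ} (ht : 0 < t) (a : ℝ) :
    (4 * π * t) ^ (-a) = (4 * π ^ 2) ^ (-a) * (π / t) ^ a := by
  rw [show π / t = 4 * π ^ 2 / (4 * π * t) by field_simp, div_rpow (by positivity) (by positivity),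
    rpow_neg (by positivity), rpow_neg (by positivity)]
  field_simp

section

variable {V : Type*} [NormedAddCommGroup V] [InnerProductSpace ℝ V] [MeasurableSpace V]

theorem integral_prod_cexp_inner_sub_eq_norm_charFun_sq (μ : Measure V) [SFinite μ] (ξ : V) :
    ∫ z, cexp (⟪z.1 - z.2, ξ⟫ * Complex.I) ∂(μ.prod μ) = (‖charFun μ ξ‖ ^ 2 : ℝ) := by
  calc _ = ∫ z, cexp (⟪z.1, ξ⟫ * Complex.I) * cexp (⟪z.2, -ξ⟫ * Complex.I) ∂(μ.prod μ) := by
        congr with z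
        rw [← Complex.exp_add, inner_sub_left, inner_neg_right]
        push_cast
        ring_nf
    _ = charFun μ ξ * conj (charFun μ ξ) := by
        rw [integral_prod_mul (fun x => cexp (⟪x, ξ⟫ * Complex.I))
          (fun y => cexp (⟪y, -ξ⟫ * Complex.I)), ← charFun_neg]
        rfl
    _ = _ := by rw [Complex.mul_conj, Complex.normSq_eq_norm_sq]

variable [FiniteDimensional ℝ V] [BorelSpace V]

theorem integrable_exp_neg_mul_sq_norm {t : ℝ} (ht : 0 < t) :
    Integrable (fun ξ : V => rexp (-t * ‖ξ‖ ^ 2)) :=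
  .of_integral_ne_zero <| by
    rw [GaussianFourier.integral_rexp_neg_mul_sq_norm ht]
    positivity

theorem integral_cexp_neg_mul_sq_norm_mul_cexp_inner {t : ℝ} (ht : 0 < t) (w : V) :
    ∫ ξ : V, cexp (-t * ‖ξ‖ ^ 2) * cexp (⟪w, ξ⟫ * Complex.I) =
      ((π / t) ^ ((Module.finrank ℝ V : ℝ) / 2) * rexp (-‖w‖ ^ 2 / (4 * t)) : ℝ) := by
  have h := GaussianFourier.integral_cexp_neg_mul_sq_norm_add (V := V) (b := t) (by simpa)
    Complex.I w
  simp_rw [← Complex.exp_add]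
  convert h using 3 with ξ
  · ring_nf
  · rw [Complex.ofReal_mul, Complex.ofReal_cpow (by positivity), Complex.ofReal_exp,
      Complex.I_sq]
    push_cast
    ring_nf

theorem integral_integral_exp_neg_dist_sq_eq_integral_norm_charFun_sq {μ : Measure V}
    [IsFiniteMeasure μ] {t : ℝ} (ht : 0 < t) :
    (π / t) ^ ((Module.finrank ℝ V : ℝ) / 2) * ∫ x, ∫ y, rexp (-(dist x y) ^ 2 / (4 * t)) ∂μ ∂μ =
      ∫ ξ : V, rexp (-t * ‖ξ‖ ^ 2) * ‖charFun μ ξ‖ ^ 2 := by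
  set G : V × V → V → ℂ := fun z ξ => cexp (-t * ‖ξ‖ ^ 2) * cexp (⟪z.1 - z.2, ξ⟫ * Complex.I)
  have hG : Integrable (Function.uncurry G) ((μ.prod μ).prod volume) := by
    refine ((integrable_const (1 : ℝ)).mul_prod (integrable_exp_neg_mul_sq_norm ht)).mono'
      (by fun_prop) (ae_of_all _ fun ⟨z, ξ⟩ => le_of_eq ?_)
    simp [G, Complex.norm_exp, ← Complex.ofReal_pow]
  have hK : Integrable (fun z : V × V => rexp (-(dist z.1 z.2) ^ 2 / (4 * t))) (μ.prod μ) := by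
    refine .of_bound (by fun_prop) 1 (ae_of_all _ fun z => ?_)
    rw [Real.norm_of_nonneg (exp_nonneg _), exp_le_one_iff]
    exact div_nonpos_of_nonpos_of_nonneg (neg_nonpos.2 (sq_nonneg _)) (by positivity)
  apply Complex.ofReal_injective
  calc
    _ = ∫ z, (((π / t) ^ ((Module.finrank ℝ V : ℝ) / 2) * rexp (-‖z.1 - z.2‖ ^ 2 / (4 * t)) : ℝ) : ℂ)
          ∂(μ.prod μ) := by
        rw [← integral_prod _ hK, ← integral_const_mul, ← integral_complex_ofReal]
        simp [dist_eq_norm]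
    _ = ∫ z, (∫ ξ, G z ξ) ∂(μ.prod μ) := by
        simp_rw [G, ← integral_cexp_neg_mul_sq_norm_mul_cexp_inner ht]
    _ = ∫ ξ, ∫ z, G z ξ ∂(μ.prod μ) := integral_integral_swap hG
    _ = ∫ ξ, ((rexp (-t * ‖ξ‖ ^ 2) * ‖charFun μ ξ‖ ^ 2 : ℝ) : ℂ) := by
        congr with ξ
        rw [integral_const_mul, integral_prod_cexp_inner_sub_eq_norm_charFun_sq]
        push_cast
        rfl
    _ = _ := integral_complex_ofReal

theorem strictAntiOn_integral_exp_neg_mul_sq_norm_mul [Nontrivial V] {F : V → ℝ}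
    (hF : Continuous F) (hF_nonneg : 0 ≤ F) {C : ℝ} (hFC : ∀ ξ, F ξ ≤ C) (hF0 : 0 < F 0) :
    StrictAntiOn (fun t => ∫ ξ, rexp (-t * ‖ξ‖ ^ 2) * F ξ) (Set.Ioi 0) := by
  have hint {t : ℝ} (ht : 0 < t) : Integrable (fun ξ : V => rexp (-t * ‖ξ‖ ^ 2) * F ξ) :=
    ((integrable_exp_neg_mul_sq_norm ht).mul_const C).mono' (by fun_prop)
      (ae_of_all _ fun ξ => by
        rw [Real.norm_of_nonneg (mul_nonneg (exp_nonneg _) (hF_nonneg ξ))]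
        exact mul_le_mul_of_nonneg_left (hFC ξ) (exp_nonneg _))
  obtain ⟨ξ₀, hξ₀, hFξ₀⟩ : ∃ ξ : V, ξ ≠ 0 ∧ 0 < F ξ := by
    obtain ⟨r, hr, hball⟩ := Metric.mem_nhds_iff.1 (hF.continuousAt.eventually (lt_mem_nhds hF0))
    obtain ⟨ξ, hξ⟩ := exists_norm_eq V (half_pos hr).le
    exact ⟨ξ, norm_ne_zero_iff.1 (by rw [hξ]; positivity), hball (by simp [hξ, hr])⟩
  intro s hs t ht hst
  have hexp (ξ : V) : rexp (-t * ‖ξ‖ ^ 2) ≤ rexp (-s * ‖ξ‖ ^ 2) :=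
    exp_le_exp.2 (by nlinarith [mul_nonneg (sub_pos.2 hst).le (sq_nonneg ‖ξ‖)])
  have hexp₀ : rexp (-t * ‖ξ₀‖ ^ 2) < rexp (-s * ‖ξ₀‖ ^ 2) :=
    exp_lt_exp.2 (by nlinarith [mul_pos (sub_pos.2 hst) (pow_pos (norm_pos_iff.2 hξ₀) 2)])
  rw [← sub_pos, ← integral_sub (hint hs) (hint ht)]
  refine integral_pos_of_integrable_nonneg_nonzero (x := ξ₀) (by fun_prop)
    ((hint hs).sub (hint ht)) (fun ξ => ?_) ?_
  · exact sub_nonneg.2 (mul_le_mul_of_nonneg_right (hexp ξ) (hF_nonneg ξ))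
  · exact (sub_pos.2 (mul_lt_mul_of_pos_right hexp₀ hFξ₀)).ne'

end

theorem heat_content_strictAnti_general (m : ℕ) (hm : 1 ≤ m)
    (Ω : Set (EuclideanSpace ℝ (Fin m)))
    (hpos : 0 < volume Ω) (hvol : volume Ω < ⊤) :
    StrictAntiOn (fun t : ℝ => ∫ x in Ω, ∫ y in Ω,
        (4 * Real.pi * t) ^ (-(m : ℝ) / 2) * Real.exp (-(dist x y) ^ 2 / (4 * t)))
      (Set.Ioi 0) := by
  have : Nonempty (Fin m) := ⟨⟨0, hm⟩⟩
  have : IsFiniteMeasure (volume.restrict Ω) := isFiniteMeasure_restrict.2 hvol.ne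
  have hH (t : ℝ) (ht : 0 < t) : ∫ x in Ω, ∫ y in Ω,
      (4 * π * t) ^ (-(m : ℝ) / 2) * rexp (-(dist x y) ^ 2 / (4 * t)) =
      (4 * π ^ 2) ^ (-(m : ℝ) / 2) *
        ∫ ξ, rexp (-t * ‖ξ‖ ^ 2) * ‖charFun (volume.restrict Ω) ξ‖ ^ 2 := by
    have h := integral_integral_exp_neg_dist_sq_eq_integral_norm_charFun_sq
      (μ := volume.restrict Ω) ht
    rw [finrank_euclideanSpace_fin] at h
    simp_rw [integral_const_mul]
    rw [neg_div, four_mul_pi_mul_rpow_neg ht, mul_assoc, h]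
  have hG := strictAntiOn_integral_exp_neg_mul_sq_norm_mul
    (F := fun ξ => ‖charFun (volume.restrict Ω) ξ‖ ^ 2) (by fun_prop) (fun ξ => by positivity)
    (fun ξ => pow_le_pow_left₀ (norm_nonneg _) (norm_charFun_le ξ) 2)
    (by simpa [Measure.real] using pow_pos (ENNReal.toReal_pos hpos.ne' hvol.ne) 2)
  intro s hs t ht hst
  dsimp only
  rw [hH s hs, hH t ht]
  exact mul_lt_mul_of_pos_left (hG hs ht hst) (by positivity)

theorem heat_content_strictAnti (m : ℕ) (hm : 1 ≤ m)
    (Ω : Set (EuclideanSpace ℝ (Fin m))) (hΩ : IsOpen Ω) (hne : Ω.Nonempty)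
    (hpos : 0 < volume Ω) (hvol : volume Ω < ⊤) :
    StrictAntiOn (fun t : ℝ => ∫ x in Ω, ∫ y in Ω,
        (4 * Real.pi * t) ^ (-(m : ℝ) / 2) * Real.exp (-(dist x y) ^ 2 / (4 * t)))
      (Set.Ioi 0) :=
  heat_content_strictAnti_general m hm Ω hpos hvol
end
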